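/- arXiv:0902.4895 — 2 statements merged into one kernel-verified Lean document; each statement's English description precedes it below -/
import Mathlib

section
/- Let A = (a_n)_{n∈ℕ} be a sequence of integers. Suppose that (a) there exists s ∈ ℕ such that the s-fold sumset sA = { a_{n_1} + a_{n_2} + ... + a_{n_s} : n_1, ..., n_s ∈ ℕ } has bounded gaps, i.e., there exist g ∈ ℕ and m_0 such that every interval [m, m+g] with m ≥ m_0 contains an element of sA; and (b) gcd{ a_n − a_1 : n ∈ ℕ } = 1. Then A is an asymptotic basis: there exist t ∈ ℕ and N_0 such that every integer N ≥ N_0 can be written as a_{n_1} + a_{n_2} + ... + a_{n_t} for some indices n_1, ..., n_t ∈ ℕ (repetitions allowed). -/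
/-!
Put `d n = a n - a 1`. The gcd condition writes `1 = P - Q` with `P`, `Q` finite sums of
values of `d`, so every `x ∈ [g Q, g Q + g]` equals `(x - g Q) P + (g Q + g - x) Q`, again such a
sum. Since `d 1 = 0`, padding gives all these sums the same number `K` of terms; hence the `K`-fold
sumset of `a` contains an interval of length `g`, and adding it to the `s`-fold sumset, whose
gaps are at most `g`, covers every large integer.
-/

open Set

theorem AddSubgroup.exists_sub_eq_of_mem_closure {G : Type*} [AddCommGroup G] {S : Set G} {x : G}
    (hx : x ∈ AddSubgroup.closure S) :
    ∃ P ∈ AddSubmonoid.closure S, ∃ Q ∈ AddSubmonoid.closure S, P - Q = x := by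
  induction hx using AddSubgroup.closure_induction with
  | mem x hx => exact ⟨x, AddSubmonoid.subset_closure hx, 0, zero_mem _, sub_zero x⟩
  | zero => exact ⟨0, zero_mem _, 0, zero_mem _, sub_zero 0⟩
  | add x y _ _ hx hy =>
    obtain ⟨P, hP, Q, hQ, rfl⟩ := hx
    obtain ⟨P', hP', Q', hQ', rfl⟩ := hy
    exact ⟨P + P', add_mem hP hP', Q + Q', add_mem hQ hQ', by abel⟩
  | neg x _ hx =>
    obtain ⟨P, hP, Q, hQ, rfl⟩ := hx
    exact ⟨Q, hQ, P, hP, (neg_sub P Q).symm⟩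

theorem Int.one_mem_closure_of_forall_dvd_isUnit {S : Set ℤ}
    (h : ∀ c : ℤ, (∀ x ∈ S, c ∣ x) → IsUnit c) : (1 : ℤ) ∈ AddSubgroup.closure S := by
  obtain ⟨c, hc⟩ := Int.subgroup_cyclic (AddSubgroup.closure S)
  rw [← AddSubgroup.zmultiples_eq_closure] at hc
  have hdvd : ∀ x ∈ S, c ∣ x := fun x hx =>
    Int.mem_zmultiples_iff.mp (hc ▸ AddSubgroup.subset_closure hx)
  rw [hc, Int.mem_zmultiples_iff]
  exact (h c hdvd).dvd

theorem AddSubmonoid.Icc_subset_of_sub_eq_one {M : AddSubmonoid ℤ} {P Q : ℤ} (hP : P ∈ M)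
    (hQ : Q ∈ M) (h : P - Q = 1) (g : ℤ) : Icc (g * Q) (g * Q + g) ⊆ M := by
  rintro x ⟨hlo, hhi⟩
  have hx : x = (x - g * Q).toNat • P + (g * Q + g - x).toNat • Q := by
    simp only [nsmul_eq_mul, Int.toNat_of_nonneg (sub_nonneg.2 hlo),
      Int.toNat_of_nonneg (sub_nonneg.2 hhi)]
    linear_combination (g * Q - x) * h
  rw [hx]
  exact add_mem (nsmul_mem hP _) (nsmul_mem hQ _)

section Sumset

variable {ι M : Type*} [AddCommMonoid M]

def nfoldSumset (f : ι → M) (t : ℕ) : Set M :=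
  {x | ∃ n : Fin t → ι, ∑ i, f (n i) = x}

variable {f : ι → M} {s t : ℕ} {x y : M}

theorem add_mem_nfoldSumset_add (hx : x ∈ nfoldSumset f s) (hy : y ∈ nfoldSumset f t) :
    x + y ∈ nfoldSumset f (s + t) := by
  obtain ⟨n, rfl⟩ := hx
  obtain ⟨m, rfl⟩ := hy
  exact ⟨Fin.append n m, by simp [Fin.sum_univ_add]⟩

theorem zero_mem_nfoldSumset {i₀ : ι} (h₀ : f i₀ = 0) (t : ℕ) : (0 : M) ∈ nfoldSumset f t :=
  ⟨fun _ => i₀, by simp [h₀]⟩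

theorem nfoldSumset_mono {i₀ : ι} (h₀ : f i₀ = 0) : Monotone (nfoldSumset f) := by
  intro s t hst x hx
  simpa [Nat.add_sub_cancel' hst] using
    add_mem_nfoldSumset_add hx (zero_mem_nfoldSumset h₀ (t - s))

theorem exists_mem_nfoldSumset_of_mem_closure (hx : x ∈ AddSubmonoid.closure (range f)) :
    ∃ t, x ∈ nfoldSumset f t := by
  induction hx using AddSubmonoid.closure_induction with
  | mem x hx =>
    obtain ⟨i, rfl⟩ := hx
    exact ⟨1, fun _ => i, by simp⟩
  | zero => exact ⟨0, fun i => i.elim0, by simp⟩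
  | add x y _ _ hx hy =>
    obtain ⟨s, hx⟩ := hx
    obtain ⟨t, hy⟩ := hy
    exact ⟨s + t, add_mem_nfoldSumset_add hx hy⟩

theorem exists_subset_nfoldSumset_of_finite {i₀ : ι} (h₀ : f i₀ = 0) {S : Set M} (hS : S.Finite)
    (hSf : S ⊆ AddSubmonoid.closure (range f)) : ∃ K, S ⊆ nfoldSumset f K := by
  have hcover : (hS.toFinset : Set M) ⊆ ⋃ t, nfoldSumset f t := fun x hx =>
    mem_iUnion.2 (exists_mem_nfoldSumset_of_mem_closure (hSf (hS.mem_toFinset.1 hx)))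
  simpa using (nfoldSumset_mono h₀).directed_le.exists_mem_subset_of_finset_subset_biUnion hcover

theorem add_nsmul_mem_nfoldSumset_add_const (c : M) (hx : x ∈ nfoldSumset f t) :
    x + t • c ∈ nfoldSumset (f · + c) t := by
  obtain ⟨n, rfl⟩ := hx
  exact ⟨n, by simp [Finset.sum_add_distrib]⟩

end Sumset

theorem exists_Icc_subset_nfoldSumset {ι : Type*} (a : ι → ℤ) (i₀ : ι)
    (h1 : (1 : ℤ) ∈ AddSubgroup.closure (range fun i => a i - a i₀)) (g : ℤ) :
    ∃ K c, Icc c (c + g) ⊆ nfoldSumset a K := by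
  obtain ⟨P, hP, Q, hQ, hPQ⟩ := AddSubgroup.exists_sub_eq_of_mem_closure h1
  obtain ⟨K, hK⟩ := exists_subset_nfoldSumset_of_finite (f := fun i => a i - a i₀) (sub_self _)
    (finite_Icc _ _)
    (AddSubmonoid.Icc_subset_of_sub_eq_one hP hQ hPQ g)
  refine ⟨K, g * Q + K • a i₀, fun x ⟨hlo, hhi⟩ => ?_⟩
  have hx : x - K • a i₀ ∈ nfoldSumset (fun i => a i - a i₀) K := hK ⟨by linarith, by linarith⟩
  simpa using add_nsmul_mem_nfoldSumset_add_const (a i₀) hx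

theorem Ici_subset_nfoldSumset_add_of_gaps {ι : Type*} {a : ι → ℤ} {s K : ℕ} {m₀ g c : ℤ}
    (hgaps : ∀ m ≥ m₀, ∃ x ∈ nfoldSumset a s, x ∈ Icc m (m + g))
    (hK : Icc c (c + g) ⊆ nfoldSumset a K) : Ici (m₀ + c + g) ⊆ nfoldSumset a (s + K) := by
  intro N hN
  obtain ⟨x, hx, hlo, hhi⟩ := hgaps (N - c - g) (by linarith [mem_Ici.1 hN])
  have hy : N - x ∈ nfoldSumset a K := hK ⟨by linarith, by linarith⟩
  simpa using add_mem_nfoldSumset_add hx hy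

/-- Erdős–Graham / Nash–Nathanson type lemma: if some `s`-fold sumset of an
integer sequence has bounded gaps and the differences `a n - a 1` have gcd 1,
then the sequence is an asymptotic basis. -/
theorem stmt_0 (a : ℕ → ℤ)
    (hgaps : ∃ s : ℕ, ∃ g : ℕ, ∃ m₀ : ℤ, ∀ m : ℤ, m ≥ m₀ →
      ∃ n : Fin s → ℕ, m ≤ ∑ i, a (n i) ∧ ∑ i, a (n i) ≤ m + g)
    (hgcd : ∀ d : ℤ, (∀ n : ℕ, d ∣ a n - a 1) → IsUnit d) :
    ∃ t : ℕ, ∃ N₀ : ℤ, ∀ N : ℤ, N ≥ N₀ →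
      ∃ n : Fin t → ℕ, ∑ i, a (n i) = N := by
  obtain ⟨s, g, m₀, hs⟩ := hgaps
  have h1 : (1 : ℤ) ∈ AddSubgroup.closure (range fun n => a n - a 1) :=
    Int.one_mem_closure_of_forall_dvd_isUnit fun d hd => hgcd d fun n => hd _ ⟨n, rfl⟩
  obtain ⟨K, c, hK⟩ := exists_Icc_subset_nfoldSumset a 1 h1 g
  have hgaps' : ∀ m ≥ m₀, ∃ x ∈ nfoldSumset a s, x ∈ Icc m (m + g) := fun m hm =>
    let ⟨n, hn⟩ := hs m hm
    ⟨_, ⟨n, rfl⟩, hn⟩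
  exact ⟨s + K, m₀ + c + g, fun N hN => Ici_subset_nfoldSumset_add_of_gaps hgaps' hK hN⟩
end

section
/- Let f : ℕ → ℝ be a function such that for every positive integer q the sequence of fractional parts ({ f(n)/q })_{n∈ℕ} is dense in [0, 1). Then for every positive integer q and every integer a there exists n ∈ ℕ with ⌊f(n)⌋ ≡ a (mod q). Consequently, gcd{ ⌊f(n)⌋ − ⌊f(1)⌋ : n ∈ ℕ } = 1. -/
/-!
Write `q ⌊f n / q⌋ + q {f n / q}` for `f n`: the first summand is a multiple of `q`, so
`⌊f n⌋ ≡ ⌊q {f n / q}⌋ (mod q)`. Density lets us put `{f n / q}` inside the window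
`[r / q, (r + 1) / q)` for any residue `r`, which forces `⌊q {f n / q}⌋ = r`.
Hitting the residue `⌊f 1⌋ + 1` modulo `|d|` shows that `d ∣ 1`.
-/

section FloorRing

variable {α : Type*} [Field α] [LinearOrder α] [IsStrictOrderedRing α] [FloorRing α]

theorem floor_modEq_floor_mul_fract_div (x : α) {q : ℤ} (hq : q ≠ 0) :
    ⌊x⌋ ≡ ⌊q * Int.fract (x / q)⌋ [ZMOD q] := by
  have hqα : (q : α) ≠ 0 := by exact_mod_cast hq
  have hx : x = q * Int.fract (x / q) + ((q * ⌊x / q⌋ : ℤ) : α) := by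
    push_cast
    rw [Int.fract]
    field_simp
    ring
  conv_lhs => rw [hx, Int.floor_add_intCast]
  exact Int.modEq_add_fac_self

theorem floor_eq_of_abs_sub_lt_half {y : α} {r : ℤ} (h : |y - (r + 1 / 2)| < 1 / 2) :
    ⌊y⌋ = r := by
  obtain ⟨hlo, hhi⟩ := abs_lt.mp h
  rw [Int.floor_eq_iff]
  constructor <;> linarith

theorem exists_floor_modEq_of_dense_fract_div {ι : Type*} (f : ι → α) {q : ℕ} (hq : 0 < q)
    (hdense : ∀ x ∈ Set.Ico (0 : α) 1, ∀ ε : α, 0 < ε → ∃ n, |Int.fract (f n / q) - x| < ε)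
    (a : ℤ) : ∃ n, ⌊f n⌋ ≡ a [ZMOD q] := by
  have hqZ : (0 : ℤ) < q := by exact_mod_cast hq
  have hqα : (0 : α) < q := by exact_mod_cast hq
  set r := a % q
  have hr0 : (0 : α) ≤ r := by exact_mod_cast Int.emod_nonneg a hqZ.ne'
  have hrq : (r : α) + 1 ≤ q := by exact_mod_cast Int.emod_lt_of_pos a hqZ
  -- the midpoint of the window `[r / q, (r + 1) / q)`
  have hmid : ((r : α) + 1 / 2) / q ∈ Set.Ico (0 : α) 1 :=
    ⟨by positivity, by rw [div_lt_one hqα]; linarith⟩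
  obtain ⟨n, hn⟩ := hdense _ hmid (1 / (2 * q)) (by positivity)
  refine ⟨n, ?_⟩
  have hfloor : ⌊(q : α) * Int.fract (f n / q)⌋ = r := by
    apply floor_eq_of_abs_sub_lt_half
    calc |(q : α) * Int.fract (f n / q) - (r + 1 / 2)|
        = q * |Int.fract (f n / q) - (r + 1 / 2) / q| := by
          rw [← abs_of_pos hqα, ← abs_mul, abs_of_pos hqα, mul_sub, mul_div_cancel₀ _ hqα.ne']
      _ < q * (1 / (2 * q)) := by gcongr
      _ = 1 / 2 := by field_simp
  have hmod := floor_modEq_floor_mul_fract_div (f n) (q := (q : ℤ)) hqZ.ne'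
  push_cast at hmod
  rw [hfloor] at hmod
  exact hmod.trans (Int.mod_modEq a q)

end FloorRing

theorem isUnit_of_forall_dvd_sub_of_forall_exists_modEq {ι : Type*} (g : ι → ℤ)
    (hg : ∀ q : ℕ, 0 < q → ∀ a : ℤ, ∃ n, g n ≡ a [ZMOD q]) {c d : ℤ}
    (hd : ∀ n, d ∣ g n - c) : IsUnit d := by
  rcases eq_or_ne d 0 with rfl | hd0
  · obtain ⟨n, hn⟩ := hg 2 two_pos (c + 1)
    have hconst : g n = c := by simpa [sub_eq_zero] using hd n
    rw [hconst] at hn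
    simp only [Int.ModEq, Nat.cast_ofNat] at hn
    omega
  · obtain ⟨n, hn⟩ := hg d.natAbs (Int.natAbs_pos.mpr hd0) (c + 1)
    have hdiff : d ∣ g n - (c + 1) := Int.natAbs_dvd.mp (Int.ModEq.dvd hn.symm)
    refine isUnit_of_dvd_one ?_
    simpa using dvd_sub (hd n) hdiff

/-- If the fractional parts of `f n / q` are dense in `[0,1)` for every positive
integer `q`, then `⌊f n⌋` hits every residue class modulo every `q`, and the
gcd of the differences `⌊f n⌋ - ⌊f 1⌋` is `1`. -/
theorem stmt_2 (f : ℕ → ℝ)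
    (hdense : ∀ q : ℕ, 0 < q → ∀ x ∈ Set.Ico (0 : ℝ) 1, ∀ ε : ℝ, 0 < ε →
      ∃ n : ℕ, |Int.fract (f n / q) - x| < ε) :
    (∀ q : ℕ, 0 < q → ∀ a : ℤ, ∃ n : ℕ, ⌊f n⌋ ≡ a [ZMOD (q : ℤ)]) ∧
    (∀ d : ℤ, (∀ n : ℕ, d ∣ ⌊f n⌋ - ⌊f 1⌋) → IsUnit d) := by
  have hres : ∀ q : ℕ, 0 < q → ∀ a : ℤ, ∃ n : ℕ, ⌊f n⌋ ≡ a [ZMOD (q : ℤ)] :=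
    fun q hq => exists_floor_modEq_of_dense_fract_div f hq (hdense q hq)
  exact ⟨hres, fun d hd => isUnit_of_forall_dvd_sub_of_forall_exists_modEq _ hres hd⟩
end
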